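/- Let Ω ⊂ ℝ^(2n+1−k) be open and φ : Ω → ℝ^k continuous. Then for all a, b ∈ Ω, ρ_φ(a,b) ≤ ‖Φ(b)^{-1}·Φ(a)‖_∞ ≤ d_φ(a,b) + |φ(a) − φ(b)|. -/

import Mathlib

/-! The point `Φ(b)⁻¹·Φ(a)` has horizontal part `(φ(a) - φ(b), ξ)` and vertical part the
quantity `T` inside `ρ_φ(a,b)`; its projection `π_𝕄` keeps `ξ` and has vertical part
`T + ½⟨φ(a) - φ(b), η - η'⟩`. The first inequality is then monotonicity of `max`. For the
second, Cauchy–Schwarz bounds the correction by `|φ(a) - φ(b)|·|ξ|`, so with `d = d_φ(a,b)`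
we get `|T| ≤ d² + ½|φ(a) - φ(b)|·d ≤ (d + |φ(a) - φ(b)|)²`. -/

open scoped BigOperators
open MeasureTheory Filter Topology

noncomputable section

namespace HeisGraph

/-! ### Points of the Heisenberg group ℍⁿ, identified with ℝ^{2n+1} -/

/-- Index type for the coordinates of a point of ℍⁿ: `x`-coordinates, `y`-coordinates
and the vertical coordinate `t`. -/
abbrev HIdxT (n : ℕ) := Sum (Fin n) (Sum (Fin n) Unit)

/-- ℍⁿ as a Euclidean space (so that the Euclidean norm is available). -/
abbrev HP (n : ℕ) := EuclideanSpace ℝ (HIdxT n)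

variable {n k : ℕ}

def xPart (p : HP n) (i : Fin n) : ℝ := p (Sum.inl i)
def yPart (p : HP n) (i : Fin n) : ℝ := p (Sum.inr (Sum.inl i))
def tPart (p : HP n) : ℝ := p (Sum.inr (Sum.inr ()))

def mkH (x y : Fin n → ℝ) (t : ℝ) : HP n :=
  WithLp.toLp 2 (fun i => Sum.elim x (Sum.elim y (fun _ => t)) i)

/-- The Heisenberg group product on ℝ^{2n+1}. -/
def hMul (p q : HP n) : HP n :=
  mkH (fun i => xPart p i + xPart q i) (fun i => yPart p i + yPart q i)
    (tPart p + tPart q + (1 / 2) * ∑ i : Fin n, (xPart p i * yPart q i - xPart q i * yPart p i))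

/-- The Heisenberg group inverse: `p⁻¹ = -p`. -/
def hInv (p : HP n) : HP n := -p

/-- The intrinsic dilations of ℍⁿ. -/
def dilH (lam : ℝ) (p : HP n) : HP n :=
  mkH (fun i => lam * xPart p i) (fun i => lam * yPart p i) (lam ^ 2 * tPart p)

/-- The homogeneous norm `‖p‖_∞ = max { |(x,y)| , |t|^{1/2} }`. -/
def normH (p : HP n) : ℝ :=
  max (Real.sqrt (∑ i, xPart p i ^ 2 + ∑ i, yPart p i ^ 2)) (Real.sqrt |tPart p|)

/-- The homogeneous distance `d_∞(p,q) = ‖q⁻¹ · p‖_∞`. -/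
def dInf (p q : HP n) : ℝ := normH (hMul (hInv q) p)

/-! ### Points of 𝕄 ≅ ℝ^{2n+1-k}: coordinates (v_{k+1..n}, η_{1..k}, w_{k+1..n}, τ) -/

abbrev MIdxT (n k : ℕ) := Sum (Fin (n - k)) (Sum (Fin k) (Sum (Fin (n - k)) Unit))

abbrev MP (n k : ℕ) := EuclideanSpace ℝ (MIdxT n k)

def vPart (a : MP n k) (j : Fin (n - k)) : ℝ := a (Sum.inl j)
def etaPart (a : MP n k) (i : Fin k) : ℝ := a (Sum.inr (Sum.inl i))
def wPart (a : MP n k) (j : Fin (n - k)) : ℝ := a (Sum.inr (Sum.inr (Sum.inl j)))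
def tauPart (a : MP n k) : ℝ := a (Sum.inr (Sum.inr (Sum.inr ())))

def mkM (v : Fin (n - k) → ℝ) (η : Fin k → ℝ) (w : Fin (n - k) → ℝ) (τ : ℝ) : MP n k :=
  WithLp.toLp 2 (fun i => Sum.elim v (Sum.elim η (Sum.elim w (fun _ => τ))) i)

/-- The embedding `i : ℝ^{2n+1-k} → ℍⁿ` onto the subgroup 𝕄 (`k` zeros among the
`x`-coordinates first). -/
def iota (a : MP n k) : HP n :=
  mkH (fun i => if h : (i : ℕ) < k then 0 else vPart a ⟨(i : ℕ) - k, by have := i.isLt; omega⟩)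
    (fun i => if h : (i : ℕ) < k then etaPart a ⟨(i : ℕ), h⟩
      else wPart a ⟨(i : ℕ) - k, by have := i.isLt; omega⟩)
    (tauPart a)

/-- The embedding `j : ℝ^k → ℍⁿ` onto the horizontal subgroup ℍ. -/
def jmap (h : EuclideanSpace ℝ (Fin k)) : HP n :=
  mkH (fun i => if hi : (i : ℕ) < k then h ⟨(i : ℕ), hi⟩ else 0) (fun _ => 0) 0

/-- The projection `π_𝕄 : ℍⁿ → 𝕄` determined by the unique factorization `p = m·h`,
`m ∈ 𝕄`, `h ∈ ℍ` (written in the coordinates of `MP n k`). -/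
def piM (hk : k ≤ n) (p : HP n) : MP n k :=
  mkM (fun j => xPart p ⟨(j : ℕ) + k, by have := j.isLt; omega⟩)
    (fun i => yPart p ⟨(i : ℕ), lt_of_lt_of_le i.isLt hk⟩)
    (fun j => yPart p ⟨(j : ℕ) + k, by have := j.isLt; omega⟩)
    (tPart p + (1 / 2) * ∑ i : Fin k,
      xPart p ⟨(i : ℕ), lt_of_lt_of_le i.isLt hk⟩ * yPart p ⟨(i : ℕ), lt_of_lt_of_le i.isLt hk⟩)

/-- The unit vertical vector of `MP n k`. -/
def tauUnit : MP n k := mkM 0 0 0 1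

/-- The product `⋆` induced on ℝ^{2n+1-k} by the group structure of 𝕄. -/
def starMul (a b : MP n k) : MP n k :=
  a + b + ((1 / 2) * ∑ j : Fin (n - k), (vPart a j * wPart b j - vPart b j * wPart a j)) • tauUnit

/-- The dilations `δ_λ^⋆` induced on ℝ^{2n+1-k}. -/
def dilStar (lam : ℝ) (a : MP n k) : MP n k :=
  mkM (fun j => lam * vPart a j) (fun i => lam * etaPart a i) (fun j => lam * wPart a j)
    (lam ^ 2 * tauPart a)

/-- The homogeneous norm of 𝕄 read on `MP n k` (it equals `normH (iota a)`). -/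
def normM (a : MP n k) : ℝ :=
  max (Real.sqrt (∑ j, vPart a j ^ 2 + ∑ i, etaPart a i ^ 2 + ∑ j, wPart a j ^ 2))
    (Real.sqrt |tauPart a|)

/-- The graph map `Φ(a) = i(a) · j(φ(a))`. -/
def graphMap (φ : MP n k → EuclideanSpace ℝ (Fin k)) (a : MP n k) : HP n :=
  hMul (iota a) (jmap (φ a))

/-- The graph distance `d_φ(a,b) = ‖π_𝕄(Φ(b)⁻¹ · Φ(a))‖_∞`. -/
def dPhi (hk : k ≤ n) (φ : MP n k → EuclideanSpace ℝ (Fin k)) (a b : MP n k) : ℝ :=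
  normM (piM hk (hMul (hInv (graphMap φ b)) (graphMap φ a)))

/-- `L : ℝ^{2n+1-k} → ℝ^k` is ⋆-linear: a homomorphism for `⋆`, homogeneous of degree 1
for the dilations `δ_λ^⋆`. -/
def IsStarLinear (L : MP n k → EuclideanSpace ℝ (Fin k)) : Prop :=
  (∀ a b, L (starMul a b) = L a + L b) ∧ ∀ lam > (0 : ℝ), ∀ a, L (dilStar lam a) = lam • L a

/-! ### Horizontal coordinates, matrices, cubes -/

/-- Index type for the `2n-k` horizontal coordinates of `MP n k` (τ deleted). -/
abbrev HorIdx (n k : ℕ) := Sum (Fin (n - k)) (Sum (Fin k) (Fin (n - k)))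

/-- The projection `π` deleting the vertical coordinate τ. -/
def piHor (a : MP n k) : HorIdx n k → ℝ :=
  Sum.elim (fun j => vPart a j) (Sum.elim (fun i => etaPart a i) (fun j => wPart a j))

/-- The ⋆-linear map associated to a `k × (2n-k)` matrix: `L(a) = M · π(a)`. -/
def ofMatrix (M : Matrix (Fin k) (HorIdx n k) ℝ) (a : MP n k) : EuclideanSpace ℝ (Fin k) :=
  WithLp.toLp 2 (fun i => M.mulVec (piHor a) i)

/-- The open coordinate cube `I_r(a)`. -/
def cube (r : ℝ) (a : MP n k) : Set (MP n k) := {p | ∀ i, |p i - a i| < r}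

/-- The closed coordinate cube `cl(I_r(a))`. -/
def closedCube (r : ℝ) (a : MP n k) : Set (MP n k) := {p | ∀ i, |p i - a i| ≤ r}

/-! ### Intrinsic differentiability -/

/-- The quantitative condition expressing uniform intrinsic differentiability of `φ`
at `a₀` (relative to `Ω`) with intrinsic differential `L`:
`lim_{r→0} sup_{a,b ∈ I_r(a₀)∩Ω} |φ(b) - φ(a) - L(a⁻¹ ⋆ b)| / d_φ(b,a) = 0`. -/
def UIDcond (hk : k ≤ n) (Ω : Set (MP n k)) (φ : MP n k → EuclideanSpace ℝ (Fin k))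
    (a₀ : MP n k) (L : MP n k → EuclideanSpace ℝ (Fin k)) : Prop :=
  ∀ ε > (0 : ℝ), ∃ r > (0 : ℝ), ∀ a ∈ cube r a₀ ∩ Ω, ∀ b ∈ cube r a₀ ∩ Ω,
    ‖φ b - φ a - L (starMul (-a) b)‖ ≤ ε * dPhi hk φ b a

/-- `φ` is uniformly intrinsic differentiable at `a₀`. -/
def UIDAt (hk : k ≤ n) (Ω : Set (MP n k)) (φ : MP n k → EuclideanSpace ℝ (Fin k))
    (a₀ : MP n k) : Prop :=
  ∃ L, IsStarLinear L ∧ UIDcond hk Ω φ a₀ L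

/-- `φ` is uniformly intrinsic differentiable at `a₀` with intrinsic Jacobian matrix `M`. -/
def UIDAtWith (hk : k ≤ n) (Ω : Set (MP n k)) (φ : MP n k → EuclideanSpace ℝ (Fin k))
    (a₀ : MP n k) (M : Matrix (Fin k) (HorIdx n k) ℝ) : Prop :=
  UIDcond hk Ω φ a₀ (ofMatrix M)

/-- The condition expressing intrinsic differentiability of `φ` at `a₀` with intrinsic
differential `L`: `lim_{a→a₀} |φ(a) - φ(a₀) - L(a₀⁻¹ ⋆ a)| / d_φ(a,a₀) = 0`. -/
def IDcond (hk : k ≤ n) (Ω : Set (MP n k)) (φ : MP n k → EuclideanSpace ℝ (Fin k))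
    (a₀ : MP n k) (L : MP n k → EuclideanSpace ℝ (Fin k)) : Prop :=
  ∀ ε > (0 : ℝ), ∃ δ > (0 : ℝ), ∀ a ∈ Ω, ‖a - a₀‖ < δ →
    ‖φ a - φ a₀ - L (starMul (-a₀) a)‖ ≤ ε * dPhi hk φ a a₀

/-- `φ` is intrinsic differentiable at `a₀`. -/
def IDAt (hk : k ≤ n) (Ω : Set (MP n k)) (φ : MP n k → EuclideanSpace ℝ (Fin k))
    (a₀ : MP n k) : Prop :=
  ∃ L, IsStarLinear L ∧ IDcond hk Ω φ a₀ L

/-- `φ` is intrinsic differentiable at `a₀` with intrinsic Jacobian matrix `M`. -/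
def IDAtWith (hk : k ≤ n) (Ω : Set (MP n k)) (φ : MP n k → EuclideanSpace ℝ (Fin k))
    (a₀ : MP n k) (M : Matrix (Fin k) (HorIdx n k) ℝ) : Prop :=
  IDcond hk Ω φ a₀ (ofMatrix M)

/-! ### The vector fields `W_j^φ` -/

/-- The `2n-k` vector fields `W^φ` on `MP n k`:
`W_j^φ = ∂_{v_j} - (1/2) w_j ∂_τ`, `∇^{φ_i} = ∂_{η_i} + φ_i ∂_τ`,
`W^φ = ∂_{w_j} + (1/2) v_j ∂_τ`. -/
def Wfield (φ : MP n k → EuclideanSpace ℝ (Fin k)) (ℓ : HorIdx n k) (p : MP n k) : MP n k :=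
  match ℓ with
  | Sum.inl j => mkM (Pi.single j 1) 0 0 (-(1 / 2) * wPart p j)
  | Sum.inr (Sum.inl i) => mkM 0 (Pi.single i 1) 0 (φ p i)
  | Sum.inr (Sum.inr j) => mkM 0 0 (Pi.single j 1) ((1 / 2) * vPart p j)

/-- For `ψ` of class C¹ (Euclidean sense), the intrinsic Jacobian matrix
`J^ψψ(m) = [(W_ℓ^ψ ψ_i)(m)]_{i,ℓ}`. -/
def JC1 (ψ : MP n k → EuclideanSpace ℝ (Fin k)) (m : MP n k) :
    Matrix (Fin k) (HorIdx n k) ℝ :=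
  Matrix.of fun i ℓ => fderiv ℝ ψ m (Wfield ψ ℓ m) i

/-- `φ` has `∂^{φ_ℓ}`-derivative `D` at `a`: along every integral curve of `W_ℓ^φ`
through `a` the difference quotients of `φ` converge to `D`. -/
def HasWDerivAt (Ω : Set (MP n k)) (φ : MP n k → EuclideanSpace ℝ (Fin k)) (ℓ : HorIdx n k)
    (a : MP n k) (D : EuclideanSpace ℝ (Fin k)) : Prop :=
  ∀ δ > (0 : ℝ), ∀ γ : ℝ → MP n k, γ 0 = a →
    (∀ s ∈ Set.Ioo (-δ) δ, γ s ∈ Ω) →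
    (∀ s ∈ Set.Ioo (-δ) δ, HasDerivAt γ (Wfield φ ℓ (γ s)) s) →
    Tendsto (fun s : ℝ => s⁻¹ • (φ (γ s) - φ a)) (𝓝[≠] (0 : ℝ)) (𝓝 D)

/-- The little-½-Hölder condition on `Ω`. -/
def LittleHolder (Ω : Set (MP n k)) (φ : MP n k → EuclideanSpace ℝ (Fin k)) : Prop :=
  ∀ Ω' : Set (MP n k), IsOpen Ω' → IsCompact (closure Ω') → closure Ω' ⊆ Ω →
    ∀ ε > (0 : ℝ), ∃ r > (0 : ℝ), ∀ a ∈ Ω', ∀ b ∈ Ω', a ≠ b → ‖a - b‖ ≤ r →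
      ‖φ a - φ b‖ ≤ ε * Real.sqrt ‖a - b‖

/-! ### `C¹_ℍ` functions on ℍⁿ -/

/-- The horizontal vector fields `X_i`, `Y_i` of ℍⁿ. -/
def Zfield (i : Sum (Fin n) (Fin n)) (p : HP n) : HP n :=
  match i with
  | Sum.inl i => mkH (Pi.single i 1) 0 (-(1 / 2) * yPart p i)
  | Sum.inr i => mkH 0 (Pi.single i 1) ((1 / 2) * xPart p i)

/-- `f : U → ℝ^k` is of class `C¹_ℍ` with horizontal derivatives `Df`: `f` is continuous
on `U`, the `Df p i` are continuous on `U` and represent the distributional derivatives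
of `f` along the horizontal vector fields. -/
def C1H (U : Set (HP n)) (f : HP n → EuclideanSpace ℝ (Fin k))
    (Df : HP n → Sum (Fin n) (Fin n) → EuclideanSpace ℝ (Fin k)) : Prop :=
  ContinuousOn f U ∧ (∀ i, ContinuousOn (fun p => Df p i) U) ∧
    ∀ (i : Sum (Fin n) (Fin n)) (j : Fin k) (ψ : HP n → ℝ),
      ContDiff ℝ (⊤ : ℕ∞) ψ → HasCompactSupport ψ → tsupport ψ ⊆ U →
      (∫ p in U, f p j * fderiv ℝ ψ p (Zfield i p)) = -∫ p in U, Df p i j * ψ p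

/-! ### The quasi-distance ρ_φ -/

/-- The function `ρ_φ(a,b)`. -/
def rhoPhi (φ : MP n k → EuclideanSpace ℝ (Fin k)) (a b : MP n k) : ℝ :=
  max
    (Real.sqrt (∑ j, (vPart a j - vPart b j) ^ 2 + ∑ i, (etaPart a i - etaPart b i) ^ 2 +
      ∑ j, (wPart a j - wPart b j) ^ 2))
    (Real.sqrt |tauPart a - tauPart b +
      (1 / 2) * ∑ i, (φ a i + φ b i) * (etaPart b i - etaPart a i) +
      (1 / 2) * ∑ j, (vPart a j * wPart b j - vPart b j * wPart a j)|)

/-! ### Families of exponential maps -/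

/-- A family of exponential maps for `φ` near `a`, as in Definition 4.2 of the paper. -/
structure ExpFamily (Ω : Set (MP n k)) (φ : MP n k → EuclideanSpace ℝ (Fin k))
    (a : MP n k) where
  δ₁ : ℝ
  δ₂ : ℝ
  pos : 0 < δ₂
  lt : δ₂ < δ₁
  sub : closedCube δ₁ a ⊆ Ω
  E : HorIdx n k → ℝ → MP n k → MP n k
  ω : HorIdx n k → MP n k → EuclideanSpace ℝ (Fin k)
  maps : ∀ ℓ, ∀ s ∈ Set.Icc (-δ₂) δ₂, ∀ b ∈ closedCube δ₂ a, E ℓ s b ∈ closedCube δ₁ a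
  start : ∀ ℓ, ∀ b ∈ closedCube δ₂ a, E ℓ 0 b = b
  isIntegral : ∀ ℓ, ∀ b ∈ closedCube δ₂ a, ∀ s ∈ Set.Icc (-δ₂) δ₂,
    HasDerivAt (fun r => E ℓ r b) (Wfield φ ℓ (E ℓ s b)) s
  contOmega : ∀ ℓ (i : Fin k), ContinuousOn (fun b => ω ℓ b i) Ω
  chain : ∀ ℓ, ∀ b ∈ closedCube δ₂ a, ∀ s ∈ Set.Icc (-δ₂) δ₂, ∀ i : Fin k,
    φ (E ℓ s b) i - φ b i = ∫ r in (0 : ℝ)..s, ω ℓ (E ℓ r b) i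

theorem sum_fin_eq_sum_add_sum {M : Type*} [AddCommMonoid M] (hk : k ≤ n) (f : Fin n → M) :
    ∑ i, f i = ∑ i : Fin k, f ⟨i, lt_of_lt_of_le i.isLt hk⟩ +
      ∑ j : Fin (n - k), f ⟨j + k, by have := j.isLt; omega⟩ := by
  rw [← (finSumFinEquiv.trans (finCongr (Nat.add_sub_cancel' hk))).sum_comp,
    Fintype.sum_sum_type]
  congr 1
  all_goals exact Finset.sum_congr rfl fun i _ => congrArg f (Fin.ext (by simp [add_comm]))

section HeisenbergCoordinates

variable (p q : HP n) (i : Fin n)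

theorem xPart_hInv_hMul : xPart (hMul (hInv q) p) i = xPart p i - xPart q i :=
  neg_add_eq_sub _ _

theorem yPart_hInv_hMul : yPart (hMul (hInv q) p) i = yPart p i - yPart q i :=
  neg_add_eq_sub _ _

theorem tPart_hInv_hMul :
    tPart (hMul (hInv q) p) = tPart p - tPart q +
      (1 / 2) * ∑ i, (xPart p i * yPart q i - xPart q i * yPart p i) := by
  change -tPart q + tPart p +
      (1 / 2) * ∑ i, (-xPart q i * yPart p i - xPart p i * -yPart q i) = _
  rw [neg_add_eq_sub]
  congr 2
  exact Finset.sum_congr rfl fun i _ => by ring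

end HeisenbergCoordinates

section GraphCoordinates

variable (φ : MP n k → EuclideanSpace ℝ (Fin k)) (a : MP n k)

theorem xPart_graphMap_of_lt (i : Fin k) (hi : (i : ℕ) < n) :
    xPart (graphMap φ a) ⟨i, hi⟩ = φ a i := by
  simp [graphMap, hMul, xPart, mkH, iota, jmap]

theorem yPart_graphMap_of_lt (i : Fin k) (hi : (i : ℕ) < n) :
    yPart (graphMap φ a) ⟨i, hi⟩ = etaPart a i := by
  simp [graphMap, hMul, yPart, mkH, iota, jmap]

theorem xPart_graphMap_add (j : Fin (n - k)) :
    xPart (graphMap φ a) ⟨j + k, by have := j.isLt; omega⟩ = vPart a j := by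
  simp [graphMap, hMul, xPart, mkH, iota, jmap]

theorem yPart_graphMap_add (j : Fin (n - k)) :
    yPart (graphMap φ a) ⟨j + k, by have := j.isLt; omega⟩ = wPart a j := by
  simp [graphMap, hMul, yPart, mkH, iota, jmap]

theorem tPart_graphMap (hk : k ≤ n) :
    tPart (graphMap φ a) = tauPart a - (1 / 2) * ∑ i, φ a i * etaPart a i := by
  simp [graphMap, hMul, tPart, xPart, yPart, mkH, iota, jmap, sum_fin_eq_sum_add_sum hk]
  ring

end GraphCoordinates

def rhoHorSq (a b : MP n k) : ℝ :=
  ∑ j, (vPart a j - vPart b j) ^ 2 + ∑ i, (etaPart a i - etaPart b i) ^ 2 +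
    ∑ j, (wPart a j - wPart b j) ^ 2

def rhoVert (φ : MP n k → EuclideanSpace ℝ (Fin k)) (a b : MP n k) : ℝ :=
  tauPart a - tauPart b + (1 / 2) * ∑ i, (φ a i + φ b i) * (etaPart b i - etaPart a i) +
    (1 / 2) * ∑ j, (vPart a j * wPart b j - vPart b j * wPart a j)

theorem rhoHorSq_nonneg (a b : MP n k) : 0 ≤ rhoHorSq a b := by
  unfold rhoHorSq; positivity

theorem rhoPhi_eq (φ : MP n k → EuclideanSpace ℝ (Fin k)) (a b : MP n k) :
    rhoPhi φ a b = max √(rhoHorSq a b) √|rhoVert φ a b| := rfl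

section Projection

variable (hk : k ≤ n) (p : HP n)

theorem vPart_piM (j : Fin (n - k)) :
    vPart (piM hk p) j = xPart p ⟨j + k, by have := j.isLt; omega⟩ := rfl

theorem etaPart_piM (i : Fin k) :
    etaPart (piM hk p) i = yPart p ⟨i, lt_of_lt_of_le i.isLt hk⟩ := rfl

theorem wPart_piM (j : Fin (n - k)) :
    wPart (piM hk p) j = yPart p ⟨j + k, by have := j.isLt; omega⟩ := rfl

theorem tauPart_piM :
    tauPart (piM hk p) = tPart p + (1 / 2) * ∑ i : Fin k,
      xPart p ⟨i, lt_of_lt_of_le i.isLt hk⟩ * yPart p ⟨i, lt_of_lt_of_le i.isLt hk⟩ := rfl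

end Projection

theorem tPart_graphMap_quot (hk : k ≤ n) (φ : MP n k → EuclideanSpace ℝ (Fin k)) (a b : MP n k) :
    tPart (hMul (hInv (graphMap φ b)) (graphMap φ a)) = rhoVert φ a b := by
  rw [tPart_hInv_hMul, tPart_graphMap φ a hk, tPart_graphMap φ b hk, sum_fin_eq_sum_add_sum hk]
  simp only [xPart_graphMap_of_lt, yPart_graphMap_of_lt, xPart_graphMap_add, yPart_graphMap_add]
  have h : ∑ i, (φ a i + φ b i) * (etaPart b i - etaPart a i) =
      ∑ i, (φ a i * etaPart b i - φ b i * etaPart a i) - ∑ i, φ a i * etaPart a i +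
        ∑ i, φ b i * etaPart b i := by
    rw [← Finset.sum_sub_distrib, ← Finset.sum_add_distrib]
    exact Finset.sum_congr rfl fun i _ => by ring
  rw [rhoVert, h]
  ring

theorem normH_graphMap_quot (hk : k ≤ n) (φ : MP n k → EuclideanSpace ℝ (Fin k)) (a b : MP n k) :
    normH (hMul (hInv (graphMap φ b)) (graphMap φ a)) =
      max √(‖φ a - φ b‖ ^ 2 + rhoHorSq a b) √|rhoVert φ a b| := by
  rw [normH, tPart_graphMap_quot hk, EuclideanSpace.real_norm_sq_eq]
  simp only [xPart_hInv_hMul, yPart_hInv_hMul, sum_fin_eq_sum_add_sum hk, xPart_graphMap_of_lt,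
    yPart_graphMap_of_lt, xPart_graphMap_add, yPart_graphMap_add, rhoHorSq, PiLp.sub_apply]
  ring_nf

theorem dPhi_eq (hk : k ≤ n) (φ : MP n k → EuclideanSpace ℝ (Fin k)) (a b : MP n k) :
    dPhi hk φ a b = max √(rhoHorSq a b)
      √|rhoVert φ a b + (1 / 2) * ∑ i, (φ a i - φ b i) * (etaPart a i - etaPart b i)| := by
  rw [dPhi, normM, tauPart_piM, tPart_graphMap_quot hk]
  simp only [vPart_piM, etaPart_piM, wPart_piM, xPart_hInv_hMul, yPart_hInv_hMul,
    xPart_graphMap_of_lt, yPart_graphMap_of_lt, xPart_graphMap_add, yPart_graphMap_add, rhoHorSq]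

theorem abs_sum_mul_etaPart_sub_le (φ : MP n k → EuclideanSpace ℝ (Fin k)) (a b : MP n k) :
    |∑ i, (φ a i - φ b i) * (etaPart a i - etaPart b i)| ≤ ‖φ a - φ b‖ * √(rhoHorSq a b) := by
  have hφ : ∑ i, (φ a i - φ b i) ^ 2 = ‖φ a - φ b‖ ^ 2 := by
    simp [EuclideanSpace.real_norm_sq_eq]
  have hη : ∑ i, (etaPart a i - etaPart b i) ^ 2 ≤ rhoHorSq a b := by
    have hv : 0 ≤ ∑ j, (vPart a j - vPart b j) ^ 2 := by positivity
    have hw : 0 ≤ ∑ j, (wPart a j - wPart b j) ^ 2 := by positivity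
    unfold rhoHorSq
    linarith
  calc |∑ i, (φ a i - φ b i) * (etaPart a i - etaPart b i)|
      ≤ √(‖φ a - φ b‖ ^ 2 * rhoHorSq a b) := Real.abs_le_sqrt <| hφ ▸
        (Finset.sum_mul_sq_le_sq_mul_sq _ _ _).trans (by gcongr)
    _ = ‖φ a - φ b‖ * √(rhoHorSq a b) := by
      rw [Real.sqrt_mul (sq_nonneg _), Real.sqrt_sq (norm_nonneg _)]

theorem max_sqrt_le_max_sqrt_add {s h T C : ℝ} (hs : 0 ≤ s) (hh : 0 ≤ h)
    (hC : |C| ≤ s * √h) :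
    max √(s ^ 2 + h) √|T| ≤ max √h √|T + (1 / 2) * C| + s := by
  set D := max √h √|T + (1 / 2) * C|
  have hhD : √h ≤ D := le_max_left _ _
  have hD : 0 ≤ D := (Real.sqrt_nonneg h).trans hhD
  have hTD : |T + (1 / 2) * C| ≤ D ^ 2 :=
    (Real.sqrt_le_left hD).mp (le_max_right _ _)
  have hT : |T| ≤ |T + (1 / 2) * C| + (1 / 2) * |C| := by
    have := abs_sub (T + (1 / 2) * C) ((1 / 2) * C)
    rwa [add_sub_cancel_right, abs_mul, abs_of_pos (by norm_num : (0 : ℝ) < 1 / 2)] at this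
  have hhD2 : h ≤ D ^ 2 := Real.sq_sqrt hh ▸ pow_le_pow_left₀ (Real.sqrt_nonneg h) hhD 2
  refine max_le ((Real.sqrt_le_left (by positivity)).mpr ?_)
    ((Real.sqrt_le_left (by positivity)).mpr ?_)
  · nlinarith [mul_nonneg hs hD]
  · nlinarith [mul_le_mul_of_nonneg_left hhD hs]

theorem statement19_general (n k : ℕ) (hk : k ≤ n)
    (Ω : Set (MP n k)) (φ : MP n k → EuclideanSpace ℝ (Fin k)) :
    ∀ a ∈ Ω, ∀ b ∈ Ω,
      rhoPhi φ a b ≤ normH (hMul (hInv (graphMap φ b)) (graphMap φ a)) ∧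
      normH (hMul (hInv (graphMap φ b)) (graphMap φ a)) ≤
        dPhi hk φ a b + ‖φ a - φ b‖ := by
  intro a _ b _
  rw [rhoPhi_eq, normH_graphMap_quot hk, dPhi_eq hk]
  exact ⟨max_le_max (Real.sqrt_le_sqrt (le_add_of_nonneg_left (sq_nonneg _))) le_rfl,
    max_sqrt_le_max_sqrt_add (norm_nonneg _) (rhoHorSq_nonneg a b)
      (abs_sum_mul_etaPart_sub_le φ a b)⟩

/-- from the proof of Proposition 5.6: for all `a, b ∈ Ω`,
`ρ_φ(a,b) ≤ ‖Φ(b)⁻¹ · Φ(a)‖_∞ ≤ d_φ(a,b) + |φ(a) - φ(b)|`. -/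
theorem statement19 (n k : ℕ) (hn : 1 ≤ n) (hk1 : 1 ≤ k) (hk : k ≤ n)
    (Ω : Set (MP n k)) (hΩ : IsOpen Ω)
    (φ : MP n k → EuclideanSpace ℝ (Fin k)) (hφ : ContinuousOn φ Ω) :
    ∀ a ∈ Ω, ∀ b ∈ Ω,
      rhoPhi φ a b ≤ normH (hMul (hInv (graphMap φ b)) (graphMap φ a)) ∧
      normH (hMul (hInv (graphMap φ b)) (graphMap φ a)) ≤
        dPhi hk φ a b + ‖φ a - φ b‖ :=
  statement19_general n k hk Ω φ

end HeisGraph
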